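/- If (M, ρ) is an additive finite pseudo-metric space, then the weight of its minimal filling equals the half-perimeter of the space: mf(M, ρ) = p(M, ρ). -/

import Mathlib

open SimpleGraph Finset

structure IsPseudoMetric {M : Type} (ρ : M → M → ℝ) : Prop where
  nonneg : ∀ p q, 0 ≤ ρ p q
  refl : ∀ p, ρ p p = 0
  symm : ∀ p q, ρ p q = ρ q p
  triangle : ∀ p q r, ρ p r ≤ ρ p q + ρ q r

/-- A tree joining a finite set `M`: a finite tree `G = (V, E)` with an injection `ι : M → V`
such that every vertex of degree 1 or 2 lies in the image of `M`. -/
structure Frame (M : Type) where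
  V : Type
  [fin : Fintype V]
  [deq : DecidableEq V]
  G : SimpleGraph V
  [dec : DecidableRel G.Adj]
  tree : G.IsTree
  ι : M → V
  inj : Function.Injective ι
  joins : ∀ v : V, G.degree v = 1 ∨ G.degree v = 2 → v ∈ Set.range ι

attribute [instance] Frame.fin Frame.deq Frame.dec

namespace Frame

variable {M : Type}

/-- The unique path between two vertices of the tree. -/
noncomputable def path (F : Frame M) (u v : F.V) : F.G.Walk u v :=
  (F.tree.existsUnique_path u v).exists.choose

/-- `d_ω(u,v)`: the sum of the weights of the edges of the unique path from `u` to `v`. -/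
noncomputable def dist (F : Frame M) (w : Sym2 F.V → ℝ) (u v : F.V) : ℝ :=
  ((F.path u v).edges.map w).sum

/-- `ω(G)`: the total weight of all edges of the tree. -/
noncomputable def weight (F : Frame M) (w : Sym2 F.V → ℝ) : ℝ :=
  ∑ e ∈ F.G.edgeFinset, w e

/-- `(G, ω)` is a filling of `(M, ρ)`: nonnegative weights and `ρ p q ≤ d_ω(ι p, ι q)`. -/
def IsFilling (F : Frame M) (w : Sym2 F.V → ℝ) (ρ : M → M → ℝ) : Prop :=
  (∀ e ∈ F.G.edgeFinset, 0 ≤ w e) ∧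
  ∀ p q : M, ρ p q ≤ F.dist w (F.ι p) (F.ι q)

end Frame

/-- `mf(M,ρ)`: the infimum of weights of fillings of `(M, ρ)`. -/
noncomputable def mf {M : Type} (ρ : M → M → ℝ) : ℝ :=
  sInf { x | ∃ F : Frame M, ∃ w : Sym2 F.V → ℝ, F.IsFilling w ρ ∧ F.weight w = x }

/-- A minimal filling: a filling whose weight equals `mf(M,ρ)`. -/
def IsMinFilling {M : Type} (F : Frame M) (w : Sym2 F.V → ℝ) (ρ : M → M → ℝ) : Prop :=
  F.IsFilling w ρ ∧ F.weight w = mf ρ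

/-- A generating tree for `(M, ρ)`: a weighted tree joining `M` with nonnegative weights
whose induced distance on `M` coincides with `ρ`. -/
def IsGenerating {M : Type} (F : Frame M) (w : Sym2 F.V → ℝ) (ρ : M → M → ℝ) : Prop :=
  (∀ e ∈ F.G.edgeFinset, 0 ≤ w e) ∧
  ∀ p q : M, F.dist w (F.ι p) (F.ι q) = ρ p q

/-- A finite pseudo-metric space is additive if it possesses a generating tree. -/
def IsAdditive {M : Type} (ρ : M → M → ℝ) : Prop :=
  ∃ (F : Frame M) (w : Sym2 F.V → ℝ), IsGenerating F w ρ

/-- A cyclic order on `M`: a permutation acting transitively (a single cycle through all of `M`). -/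
def IsCyclicOrder {M : Type} (π : Equiv.Perm M) : Prop :=
  ∀ p q : M, ∃ n : ℕ, (π ^ n) p = q

/-- The half-perimeter of the space: half the minimum over all cyclic orders of the perimeter. -/
noncomputable def halfPerimSpace {M : Type} [Fintype M] (ρ : M → M → ℝ) : ℝ :=
  sInf { x | ∃ σ : Equiv.Perm M, IsCyclicOrder σ ∧ x = (∑ p : M, ρ p (σ p)) / 2 }

/-! If `(G, ω)` is a generating tree, every edge of `G` has points of `M` on both sides (each
side contains a leaf, and leaves lie in `M`). Hence for every cyclic order `σ` the tree paths from
`p` to `σ p` cross each edge at least twice, so `2 ω(G) ≤ ∑ ρ(p, σ p)` and `mf ≤ ω(G) ≤ p(M, ρ)`.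
Conversely, any weighted tree has a closed tour through all its vertices of length at most
`2 ω(G)`: grow the tour one vertex at a time, inserting a new vertex next to a tour vertex adjacent
to it. Shortcutting this tour to `M` gives a cyclic order with `∑ d_ω(p, σ p) ≤ 2 ω(G)`, so every
filling has weight at least `p(M, ρ)`. -/

section RouteCost

variable {α : Type*} (d : α → α → ℝ)

/-- A closed tour through `r :: t` is encoded as `routeCost d r t r`. -/
def routeCost : α → List α → α → ℝ
  | a, [], b => d a b
  | a, x :: t, b => d a x + routeCost x t b

variable {d}

@[simp] lemma routeCost_nil (a b : α) : routeCost d a [] b = d a b := rfl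

@[simp] lemma routeCost_cons (a x b : α) (t : List α) :
    routeCost d a (x :: t) b = d a x + routeCost d x t b := rfl

lemma routeCost_append_cons (t₁ t₂ : List α) (a u b : α) :
    routeCost d a (t₁ ++ u :: t₂) b = routeCost d a t₁ u + routeCost d u t₂ b := by
  induction t₁ generalizing a with
  | nil => rfl
  | cons x t ih => simp [ih, add_assoc]

lemma routeCost_map {β : Type*} (f : β → α) (l : List β) (a b : β) :
    routeCost d (f a) (l.map f) (f b) = routeCost (fun x y => d (f x) (f y)) a l b := by
  induction l generalizing a with
  | nil => rfl
  | cons x t ih => simp [ih]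

lemma routeCost_eq_sum_zipWith (t : List α) (a b : α) :
    routeCost d a t b = (List.zipWith d (a :: t) (t ++ [b])).sum := by
  induction t generalizing a with
  | nil => simp
  | cons x t ih => simp [ih]

lemma List.Nodup.sum_map_formPerm_eq_routeCost [DecidableEq α] {a : α} {t : List α}
    (h : (a :: t).Nodup) :
    ((a :: t).map fun x => d x ((a :: t).formPerm x)).sum = routeCost d a t a := by
  have hzip : ((a :: t).map fun x => d x ((a :: t).formPerm x)) =
      List.zipWith d (a :: t) ((a :: t).rotate 1) := by
    refine List.ext_getElem (by simp) fun i hi _ => ?_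
    simp only [List.getElem_map, List.getElem_zipWith, List.getElem_rotate,
      List.formPerm_apply_getElem _ h]
  rw [hzip, routeCost_eq_sum_zipWith]
  simp

section Triangle

variable (htri : ∀ a b c, d a c ≤ d a b + d b c)
include htri

lemma routeCost_le_add_routeCost (l : List α) (a x b : α) :
    routeCost d a l b ≤ d a x + routeCost d x l b := by
  cases l with
  | nil => exact htri a x b
  | cons y t =>
    simp only [routeCost_cons, ← add_assoc]
    exact add_le_add_left (htri a x y) _

lemma List.Sublist.routeCost_le {l' l : List α} (h : l'.Sublist l) (a b : α) :
    routeCost d a l' b ≤ routeCost d a l b := by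
  induction h generalizing a with
  | slnil => exact le_rfl
  | cons x _ ih => exact (ih a).trans (routeCost_le_add_routeCost htri _ a x b)
  | cons_cons x _ ih => simpa using ih x

/-- `v` is inserted right after the stop `u`. -/
lemma exists_perm_routeCost_le {r u : α} {t : List α} (hu : u ∈ r :: t) (v : α) :
    ∃ t', t'.Perm (v :: t) ∧ routeCost d r t' r ≤ routeCost d r t r + (d u v + d v u) := by
  rcases List.mem_cons.mp hu with rfl | hu
  · refine ⟨v :: t, .refl _, ?_⟩
    have := routeCost_le_add_routeCost htri t v u u
    simp only [routeCost_cons]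
    linarith
  · obtain ⟨t₁, t₂, rfl⟩ := List.append_of_mem hu
    refine ⟨t₁ ++ u :: v :: t₂,
      by simpa using List.perm_middle (l₁ := t₁ ++ [u]) (l₂ := t₂), ?_⟩
    have := routeCost_le_add_routeCost htri t₂ v u r
    simp only [routeCost_append_cons, routeCost_cons]
    linarith

end Triangle

end RouteCost

lemma exists_routeCost_comp_le {M V : Type*} {d : V → V → ℝ}
    (htri : ∀ a b c, d a c ≤ d a b + d b c) {ι : M → V} (hι : Function.Injective ι) {p₀ : M}
    {t : List V} (hnd : (ι p₀ :: t).Nodup) (hcover : ∀ x, x ∈ ι p₀ :: t) :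
    ∃ m : List M, (p₀ :: m).Nodup ∧ (∀ p, p ∈ p₀ :: m) ∧
      routeCost (fun p q => d (ι p) (ι q)) p₀ m p₀ ≤ routeCost d (ι p₀) t (ι p₀) := by
  have hsub : ∀ l : List V, ((l.filterMap (Function.partialInv ι)).map ι).Sublist l := by
    intro l
    induction l with
    | nil => simp
    | cons x l ih =>
      cases hx : Function.partialInv ι x with
      | none => simpa [hx] using ih.cons x
      | some p =>
        rw [hι.isPartialInv] at hx
        subst hx
        simpa [Function.partialInv_left hι] using ih.cons_cons (ι p)
  refine ⟨t.filterMap (Function.partialInv ι), ?_, fun p => ?_, ?_⟩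
  · exact List.Nodup.of_map ι (by simpa using hnd.sublist ((hsub t).cons_cons (ι p₀)))
  · rcases List.mem_cons.mp (hcover (ι p)) with h | h
    · exact List.mem_cons.mpr (.inl (hι h))
    · exact List.mem_cons_of_mem _
        (List.mem_filterMap.mpr ⟨ι p, h, Function.partialInv_left hι p⟩)
  · rw [← routeCost_map]
    exact (hsub t).routeCost_le htri _ _

section CyclicOrder

variable {M : Type}

lemma List.Nodup.isCyclicOrder_formPerm [DecidableEq M] {l : List M} (hl : l.Nodup)
    (hcover : ∀ p, p ∈ l) : IsCyclicOrder l.formPerm := fun p q =>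
  hl.isCycleOn_formPerm.exists_pow_eq' l.finite_toSet (hcover p) (hcover q)

lemma IsCyclicOrder.exists_apply_not {σ : Equiv.Perm M} (hσ : IsCyclicOrder σ)
    {S : M → Prop} {a b : M} (ha : S a) (hb : ¬ S b) : ∃ p, S p ∧ ¬ S (σ p) := by
  by_contra! h
  have hpow : ∀ n : ℕ, S ((σ ^ n) a) := fun n => by
    induction n with
    | zero => simpa using ha
    | succ n ih => simpa [pow_succ', Equiv.Perm.mul_apply] using h _ ih
  obtain ⟨n, rfl⟩ := hσ a b
  exact hb (hpow n)

lemma exists_isCyclicOrder_sum_eq_routeCost [Fintype M] (d : M → M → ℝ) {r : M} {t : List M}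
    (hnd : (r :: t).Nodup) (hcover : ∀ p, p ∈ r :: t) :
    ∃ σ : Equiv.Perm M, IsCyclicOrder σ ∧ ∑ p, d p (σ p) = routeCost d r t r := by
  classical
  refine ⟨(r :: t).formPerm, hnd.isCyclicOrder_formPerm hcover, ?_⟩
  rw [← Finset.eq_univ_of_forall fun p => List.mem_toFinset.mpr (hcover p),
    List.sum_toFinset _ hnd, hnd.sum_map_formPerm_eq_routeCost]

lemma halfPerimSpace_le [Fintype M] (ρ : M → M → ℝ) {σ : Equiv.Perm M}
    (hσ : IsCyclicOrder σ) : halfPerimSpace ρ ≤ (∑ p, ρ p (σ p)) / 2 := by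
  refine csInf_le (Set.Finite.bddBelow ?_) ⟨σ, hσ, rfl⟩
  exact (Set.finite_range fun τ : Equiv.Perm M => (∑ p, ρ p (τ p)) / 2).subset
    (by rintro _ ⟨τ, -, rfl⟩; exact ⟨τ, rfl⟩)

end CyclicOrder

namespace SimpleGraph

variable {V : Type} {G : SimpleGraph V}

theorem IsAcyclic.mem_edges_iff_not_reachable_deleteEdges [DecidableEq V] (hG : G.IsAcyclic)
    {a b : V} {p : G.Walk a b} (hp : p.IsPath) (e : Sym2 V) :
    e ∈ p.edges ↔ ¬ (G.deleteEdges {e}).Reachable a b := by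
  induction e using Sym2.ind with
  | _ x y =>
    rw [reachable_deleteEdges_iff_exists_walk, not_exists_not]
    refine ⟨fun he q => ?_, fun h => h p⟩
    have : p = q.bypass := congrArg Subtype.val <|
      (hG.subsingleton_path a b).elim ⟨p, hp⟩ ⟨_, q.bypass_isPath⟩
    exact q.edges_bypass_subset_edges (this ▸ he)

/-- The leaf is the end of a longest path starting with the edge `v → u`. -/
theorem IsAcyclic.exists_degree_eq_one_reachable_deleteEdges [Fintype V] [DecidableRel G.Adj]
    (hG : G.IsAcyclic) {u v : V} (h : G.Adj u v) :
    ∃ y, G.degree y = 1 ∧ (G.deleteEdges {s(u, v)}).Reachable u y := by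
  let s : Set ℕ := {n | ∃ (y : V) (q : G.Walk u y), (Walk.cons h.symm q).IsPath ∧ q.length = n}
  have hne : s.Nonempty := ⟨0, u, .nil, by simp [h.ne'], rfl⟩
  have hbdd : BddAbove s := ⟨Fintype.card V, by
    rintro _ ⟨y, q, hq, rfl⟩
    have := hq.length_lt
    simp only [Walk.length_cons] at this
    omega⟩
  obtain ⟨y, q, hq, hlen⟩ := Nat.sSup_mem hne hbdd
  refine ⟨y, degree_eq_one_iff_existsUnique_adj.mpr
    ⟨_, ((Walk.cons h.symm q).adj_penultimate Walk.not_nil_cons).symm, fun z hz => ?_⟩, ?_⟩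
  · refine hG.eq_penultimate_of_adj_end hq hz (by_contra fun hzq => ?_)
    have := le_csSup hbdd
      ⟨z, q.concat hz, by simpa [Walk.concat_cons] using hq.concat hzq hz, rfl⟩
    simp only [Walk.length_concat] at this
    omega
  · rw [reachable_deleteEdges_iff_exists_walk]
    exact ⟨q, fun he =>
      ((Walk.cons_isPath_iff _ _).mp hq).2 (q.snd_mem_support_of_mem_edges he)⟩

section RouteCover

variable [Fintype V] [DecidableEq V] [DecidableRel G.Adj] {w : Sym2 V → ℝ} {d : V → V → ℝ}

/-- The new vertex is inserted next to a tour vertex adjacent to it: the cost grows by at most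
twice the weight of the new edge, which was not yet spanned by the tour. -/
lemma Preconnected.exists_routeCost_le_of_not_mem (hG : G.Preconnected)
    (hw : ∀ e ∈ G.edgeFinset, 0 ≤ w e) (htri : ∀ a b c, d a c ≤ d a b + d b c)
    (hadj : ∀ a b, G.Adj a b → d a b ≤ w s(a, b)) {r : V} {t : List V} (hnd : (r :: t).Nodup)
    (hcost : routeCost d r t r ≤ 2 * ∑ e ∈ G.edgeFinset ∩ (r :: t).toFinset.sym2, w e)
    {x : V} (hx : x ∉ r :: t) :
    ∃ t' : List V, t'.length = t.length + 1 ∧ (r :: t').Nodup ∧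
      routeCost d r t' r ≤ 2 * ∑ e ∈ G.edgeFinset ∩ (r :: t').toFinset.sym2, w e := by
  obtain ⟨dt, -, hu, hv⟩ := (hG r x).some.exists_boundary_dart {y | y ∈ r :: t} (by simp) hx
  obtain ⟨t', hperm, hle⟩ := exists_perm_routeCost_le htri hu dt.snd
  have hperm' : (r :: t').Perm (dt.snd :: r :: t) := (hperm.cons r).trans (.swap _ _ _)
  have hsub : insert s(dt.fst, dt.snd) (G.edgeFinset ∩ (r :: t).toFinset.sym2) ⊆
      G.edgeFinset ∩ (r :: t').toFinset.sym2 := by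
    have hmem : ∀ y, y ∈ r :: t' ↔ y = dt.snd ∨ y ∈ r :: t := by simp [hperm'.mem_iff]
    intro e he
    simp only [Finset.mem_insert, Finset.mem_inter, mem_edgeFinset, Finset.mem_sym2_iff,
      List.mem_toFinset, hmem] at he ⊢
    rcases he with rfl | ⟨he, hall⟩
    · exact ⟨dt.adj, by simpa using hu⟩
    · exact ⟨he, fun y hy => .inr (hall y hy)⟩
  have hnotin : s(dt.fst, dt.snd) ∉ G.edgeFinset ∩ (r :: t).toFinset.sym2 := fun h =>
    hv (List.mem_toFinset.mp (Finset.mem_sym2_iff.mp (Finset.mem_inter.mp h).2 _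
      (Sym2.mem_mk_right _ _)))
  have hround : d dt.fst dt.snd + d dt.snd dt.fst ≤ 2 * w s(dt.fst, dt.snd) := by
    have := hadj _ _ dt.adj.symm
    rw [Sym2.eq_swap] at this
    linarith [hadj _ _ dt.adj]
  refine ⟨t', by simpa using hperm.length_eq,
    hperm'.nodup_iff.mpr (List.nodup_cons.mpr ⟨hv, hnd⟩), ?_⟩
  calc routeCost d r t' r ≤ 2 * ∑ e ∈ G.edgeFinset ∩ (r :: t).toFinset.sym2, w e +
        2 * w s(dt.fst, dt.snd) := by linarith
    _ = 2 * ∑ e ∈ insert s(dt.fst, dt.snd) (G.edgeFinset ∩ (r :: t).toFinset.sym2), w e := by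
        rw [Finset.sum_insert hnotin]; ring
    _ ≤ 2 * ∑ e ∈ G.edgeFinset ∩ (r :: t').toFinset.sym2, w e :=
        mul_le_mul_of_nonneg_left (Finset.sum_le_sum_of_subset_of_nonneg hsub
          fun e he _ => hw e (Finset.mem_inter.mp he).1) zero_le_two

lemma Connected.exists_routeCost_le (hG : G.Connected) (hw : ∀ e ∈ G.edgeFinset, 0 ≤ w e)
    (hd : ∀ a, d a a = 0) (htri : ∀ a b c, d a c ≤ d a b + d b c)
    (hadj : ∀ a b, G.Adj a b → d a b ≤ w s(a, b)) (r : V) :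
    ∃ t : List V, (r :: t).Nodup ∧ (∀ x, x ∈ r :: t) ∧
      routeCost d r t r ≤ 2 * ∑ e ∈ G.edgeFinset, w e := by
  let s : Set ℕ := {n | ∃ t : List V, t.length = n ∧ (r :: t).Nodup ∧
      routeCost d r t r ≤ 2 * ∑ e ∈ G.edgeFinset ∩ (r :: t).toFinset.sym2, w e}
  have hne : s.Nonempty := ⟨0, [], rfl, List.nodup_singleton r, by simp [hd]⟩
  have hbdd : BddAbove s := ⟨Fintype.card V, by
    rintro _ ⟨t, rfl, hnd, -⟩
    exact Nat.le_of_succ_le hnd.length_le_card⟩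
  obtain ⟨t, hlen, hnd, hcost⟩ := Nat.sSup_mem hne hbdd
  have hcover : ∀ x, x ∈ r :: t := fun x => by_contra fun hx => by
    obtain ⟨t', hlen', hnd', hcost'⟩ :=
      hG.preconnected.exists_routeCost_le_of_not_mem hw htri hadj hnd hcost hx
    have := le_csSup hbdd ⟨t', rfl, hnd', hcost'⟩
    omega
  exact ⟨t, hnd, hcover, hcost.trans <| mul_le_mul_of_nonneg_left
    (Finset.sum_le_sum_of_subset_of_nonneg Finset.inter_subset_left fun e he _ => hw e he)
    zero_le_two⟩

end RouteCover

end SimpleGraph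

namespace Frame

variable {M : Type} (F : Frame M)

lemma path_isPath (u v : F.V) : (F.path u v).IsPath :=
  (F.tree.existsUnique_path u v).exists.choose_spec

lemma path_eq {u v : F.V} {p : F.G.Walk u v} (hp : p.IsPath) : F.path u v = p :=
  (F.tree.existsUnique_path u v).unique (F.path_isPath u v) hp

lemma dist_eq_of_isPath (w : Sym2 F.V → ℝ) {u v : F.V} {p : F.G.Walk u v} (hp : p.IsPath) :
    F.dist w u v = (p.edges.map w).sum := by
  rw [dist, F.path_eq hp]

lemma dist_self (w : Sym2 F.V → ℝ) (u : F.V) : F.dist w u u = 0 := by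
  simp [F.dist_eq_of_isPath w Walk.IsPath.nil]

lemma dist_eq_sum_ite (w : Sym2 F.V → ℝ) (u v : F.V) :
    F.dist w u v = ∑ e ∈ F.G.edgeFinset, if e ∈ (F.path u v).edges then w e else 0 := by
  rw [← Finset.sum_filter, dist, ← List.sum_toFinset w (F.path_isPath u v).isTrail.edges_nodup]
  congr 1
  ext e
  simpa using fun he => (F.path u v).edges_subset_edgeSet he

lemma exists_reachable_deleteEdges {u v : F.V} (h : F.G.Adj u v) :
    ∃ p, (F.G.deleteEdges {s(u, v)}).Reachable u (F.ι p) := by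
  obtain ⟨y, hy, hreach⟩ := F.tree.isAcyclic.exists_degree_eq_one_reachable_deleteEdges h
  obtain ⟨p, rfl⟩ := F.joins y (.inl hy)
  exact ⟨p, hreach⟩

/-- Both sides of an edge contain points of `M`, so a cyclic order crosses it at least twice. -/
lemma two_le_card_filter_mem_edges_path [Fintype M] {σ : Equiv.Perm M} (hσ : IsCyclicOrder σ)
    {u v : F.V} (h : F.G.Adj u v) :
    2 ≤ #{p | s(u, v) ∈ (F.path (F.ι p) (F.ι (σ p))).edges} := by
  set H := F.G.deleteEdges {s(u, v)}
  have hcross : ∀ p, s(u, v) ∈ (F.path (F.ι p) (F.ι (σ p))).edges ↔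
      ¬ H.Reachable (F.ι p) (F.ι (σ p)) := fun p =>
    F.tree.isAcyclic.mem_edges_iff_not_reachable_deleteEdges (F.path_isPath _ _) _
  have hbridge : ¬ H.Reachable u v :=
    isBridge_iff.mp (isAcyclic_iff_forall_adj_isBridge.mp F.tree.isAcyclic h)
  obtain ⟨a, ha⟩ := F.exists_reachable_deleteEdges h
  obtain ⟨b, hb⟩ := F.exists_reachable_deleteEdges h.symm
  rw [Sym2.eq_swap] at hb
  have hb' : ¬ H.Reachable u (F.ι b) := fun hub => hbridge (hub.trans hb.symm)
  obtain ⟨p, hp, hσp⟩ := hσ.exists_apply_not (S := fun p => H.Reachable u (F.ι p)) ha hb'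
  obtain ⟨q, hq, hσq⟩ :=
    hσ.exists_apply_not (S := fun p => ¬ H.Reachable u (F.ι p)) hb' (not_not.mpr ha)
  rw [not_not] at hσq
  refine Finset.one_lt_card.mpr ⟨p, ?_, q, ?_, fun hpq => hq (hpq ▸ hp)⟩
  · simpa [hcross] using fun h' => hσp (hp.trans h')
  · simpa [hcross] using fun h' => hq (hσq.trans h'.symm)

section NonnegWeights

variable {F} {w : Sym2 F.V → ℝ} (hw : ∀ e ∈ F.G.edgeFinset, 0 ≤ w e)
include hw

lemma weight_nonneg : 0 ≤ F.weight w := Finset.sum_nonneg hw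

lemma dist_le_sum_edges {u v : F.V} (q : F.G.Walk u v) : F.dist w u v ≤ (q.edges.map w).sum := by
  rw [F.dist_eq_of_isPath w q.bypass_isPath]
  refine (q.edges_bypass_sublist_edges.map w).sum_le_sum ?_
  simpa using fun e he => hw e (mem_edgeFinset.mpr (q.edges_subset_edgeSet he))

lemma dist_triangle (u v x : F.V) : F.dist w u x ≤ F.dist w u v + F.dist w v x := by
  simpa [dist] using dist_le_sum_edges hw ((F.path u v).append (F.path v x))

lemma dist_le_of_adj {u v : F.V} (h : F.G.Adj u v) : F.dist w u v ≤ w s(u, v) := by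
  simpa using dist_le_sum_edges hw (Walk.cons h Walk.nil)

lemma two_mul_weight_le_sum_dist [Fintype M] {σ : Equiv.Perm M} (hσ : IsCyclicOrder σ) :
    2 * F.weight w ≤ ∑ p, F.dist w (F.ι p) (F.ι (σ p)) := by
  simp_rw [F.dist_eq_sum_ite]
  rw [Finset.sum_comm, weight, Finset.mul_sum]
  refine Finset.sum_le_sum fun e he => ?_
  induction e using Sym2.ind with
  | _ u v =>
    rw [← Finset.sum_filter, Finset.sum_const, nsmul_eq_mul]
    exact mul_le_mul_of_nonneg_right
      (mod_cast F.two_le_card_filter_mem_edges_path hσ (mem_edgeFinset.mp he)) (hw _ he)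

lemma exists_isCyclicOrder_sum_dist_le [Fintype M] :
    ∃ σ : Equiv.Perm M, IsCyclicOrder σ ∧
      ∑ p, F.dist w (F.ι p) (F.ι (σ p)) ≤ 2 * F.weight w := by
  rcases isEmpty_or_nonempty M with _ | ⟨⟨p₀⟩⟩
  · exact ⟨1, fun p => isEmptyElim p, by simpa using weight_nonneg hw⟩
  obtain ⟨t, hnd, hcover, hcost⟩ := F.tree.connected.exists_routeCost_le hw (F.dist_self w)
    (dist_triangle hw) (fun _ _ => dist_le_of_adj hw) (F.ι p₀)
  obtain ⟨m, hmnd, hmcover, hmcost⟩ :=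
    exists_routeCost_comp_le (dist_triangle hw) F.inj hnd hcover
  obtain ⟨σ, hσ, hsum⟩ := exists_isCyclicOrder_sum_eq_routeCost _ hmnd hmcover
  exact ⟨σ, hσ, hsum.trans_le (hmcost.trans hcost)⟩

end NonnegWeights

end Frame

section MinimalFilling

variable {M : Type} {ρ : M → M → ℝ} {F : Frame M} {w : Sym2 F.V → ℝ}

lemma IsGenerating.isFilling (hgen : IsGenerating F w ρ) : F.IsFilling w ρ :=
  ⟨hgen.1, fun p q => (hgen.2 p q).ge⟩

lemma IsGenerating.two_mul_weight_le_sum [Fintype M] (hgen : IsGenerating F w ρ)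
    {σ : Equiv.Perm M} (hσ : IsCyclicOrder σ) : 2 * F.weight w ≤ ∑ p, ρ p (σ p) := by
  simpa only [hgen.2] using Frame.two_mul_weight_le_sum_dist hgen.1 hσ

lemma Frame.IsFilling.mf_le_weight (hF : F.IsFilling w ρ) : mf ρ ≤ F.weight w :=
  csInf_le ⟨0, by rintro _ ⟨F', w', hF', rfl⟩; exact Frame.weight_nonneg hF'.1⟩ ⟨F, w, hF, rfl⟩

lemma Frame.IsFilling.halfPerimSpace_le_weight [Fintype M] (hF : F.IsFilling w ρ) :
    halfPerimSpace ρ ≤ F.weight w := by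
  obtain ⟨σ, hσ, hle⟩ := F.exists_isCyclicOrder_sum_dist_le hF.1
  have : ∑ p, ρ p (σ p) ≤ ∑ p, F.dist w (F.ι p) (F.ι (σ p)) :=
    Finset.sum_le_sum fun p _ => hF.2 p (σ p)
  linarith [halfPerimSpace_le ρ hσ]

lemma IsGenerating.mf_le_halfPerimSpace [Fintype M] (hgen : IsGenerating F w ρ) :
    mf ρ ≤ halfPerimSpace ρ := by
  obtain ⟨σ₀, hσ₀, -⟩ := F.exists_isCyclicOrder_sum_dist_le hgen.1
  refine le_csInf ⟨_, σ₀, hσ₀, rfl⟩ ?_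
  rintro _ ⟨σ, hσ, rfl⟩
  linarith [hgen.two_mul_weight_le_sum hσ, hgen.isFilling.mf_le_weight]

lemma IsGenerating.halfPerimSpace_le_mf [Fintype M] (hgen : IsGenerating F w ρ) :
    halfPerimSpace ρ ≤ mf ρ := by
  refine le_csInf ⟨_, F, w, hgen.isFilling, rfl⟩ ?_
  rintro _ ⟨F', w', hF', rfl⟩
  exact hF'.halfPerimSpace_le_weight

end MinimalFilling

theorem stmt11_general {M : Type} [Fintype M] (ρ : M → M → ℝ)
    (hadd : IsAdditive ρ) :
    mf ρ = halfPerimSpace ρ := by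
  obtain ⟨F, w, hgen⟩ := hadd
  exact le_antisymm hgen.mf_le_halfPerimSpace hgen.halfPerimSpace_le_mf

theorem stmt11 {M : Type} [Fintype M] (ρ : M → M → ℝ) (hρ : IsPseudoMetric ρ)
    (hadd : IsAdditive ρ) :
    mf ρ = halfPerimSpace ρ :=
  stmt11_general ρ hadd
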